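/- Let K be a field, A an associative unital K-algebra, and V, W finite-dimensional K-vector spaces. In the K-algebra B = End(V) ⊗ End(W) ⊗ A, write X₁₂ = X ⊗ 1_A for X ∈ End(V) ⊗ End(W); write S₁₃ for the image of S ∈ End(V) ⊗ A under the algebra embedding x ⊗ a ↦ x ⊗ 1 ⊗ a, and T₂₃ for the image of T ∈ End(W) ⊗ A under y ⊗ a ↦ 1 ⊗ y ⊗ a. Let τ_V : End(V) ⊗ A → A be the linear map induced by x ⊗ a ↦ tr(x)·a, and similarly τ_W : End(W) ⊗ A → A. If X is invertible in End(V) ⊗ End(W) and X₁₂ · S₁₃ · T₂₃ = T₂₃ · S₁₃ · X₁₂ holds in B, then τ_V(S) · τ_W(T) = τ_W(T) · τ_V(S) in A. -/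

import Mathlib

/-! Apply the total trace `τ = (Tr_V ⊗ Tr_W) ⊗ id` to `S₁₃ T₂₃ = X₁₂⁻¹ (T₂₃ S₁₃) X₁₂`. On the
mixed products `S₁₃ T₂₃` and `T₂₃ S₁₃` it gives `τ_V(S) τ_W(T)` and `τ_W(T) τ_V(S)`, and it is
invariant under conjugation by `X₁₂` because `Tr_V ⊗ Tr_W` is cyclic on `End V ⊗ End W`, each
factor being cyclic. -/

open TensorProduct

set_option maxSynthPendingDepth 3

section

variable (K : Type*) [Field K] (A : Type*) [Ring A] [Algebra K A]
variable (V W : Type*) [AddCommGroup V] [Module K V] [AddCommGroup W] [Module K W]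

/-- `X₁₂ = X ⊗ 1_A` : the embedding `End(V) ⊗ End(W) → End(V) ⊗ End(W) ⊗ A`. -/
noncomputable def emb12 :
    (Module.End K V ⊗[K] Module.End K W) →ₐ[K]
      (Module.End K V ⊗[K] Module.End K W) ⊗[K] A :=
  Algebra.TensorProduct.includeLeft

/-- `S ↦ S₁₃` : the algebra embedding `End(V) ⊗ A → End(V) ⊗ End(W) ⊗ A`,
`x ⊗ a ↦ x ⊗ 1 ⊗ a`. -/
noncomputable def emb13 :
    (Module.End K V ⊗[K] A) →ₐ[K] (Module.End K V ⊗[K] Module.End K W) ⊗[K] A :=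
  Algebra.TensorProduct.map
    (Algebra.TensorProduct.includeLeft :
      Module.End K V →ₐ[K] Module.End K V ⊗[K] Module.End K W)
    (AlgHom.id K A)

/-- `T ↦ T₂₃` : the algebra embedding `End(W) ⊗ A → End(V) ⊗ End(W) ⊗ A`,
`y ⊗ a ↦ 1 ⊗ y ⊗ a`. -/
noncomputable def emb23 :
    (Module.End K W ⊗[K] A) →ₐ[K] (Module.End K V ⊗[K] Module.End K W) ⊗[K] A :=
  Algebra.TensorProduct.map
    (Algebra.TensorProduct.includeRight :
      Module.End K W →ₐ[K] Module.End K V ⊗[K] Module.End K W)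
    (AlgHom.id K A)

/-- The partial trace `τ_V : End(V) ⊗ A → A`, `x ⊗ a ↦ tr(x)·a`. -/
noncomputable def partialTrace :
    (Module.End K V ⊗[K] A) →ₗ[K] A :=
  TensorProduct.lift (LinearMap.lsmul K A ∘ₗ LinearMap.trace K V)

namespace TensorProduct

variable {R P Q B : Type*} [CommSemiring R] [Semiring P] [Algebra R P] [Semiring Q] [Algebra R Q]
  [Semiring B] [Algebra R B]

noncomputable def sliceMap (t : P →ₗ[R] R) : P ⊗[R] B →ₗ[R] B :=
  lift (LinearMap.lsmul R B ∘ₗ t)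

@[simp]
theorem sliceMap_tmul (t : P →ₗ[R] R) (x : P) (b : B) : sliceMap t (x ⊗ₜ[R] b) = t x • b :=
  rfl

theorem sliceMap_tmul_one_mul_comm {t : P →ₗ[R] R} (ht : ∀ x y, t (x * y) = t (y * x)) (x : P)
    (u : P ⊗[R] B) : sliceMap t ((x ⊗ₜ[R] 1) * u) = sliceMap t (u * (x ⊗ₜ[R] 1)) := by
  induction u using TensorProduct.induction_on with
  | zero => simp
  | tmul y b => simp [ht x y]
  | add u v hu hv => simp only [mul_add, add_mul, map_add, hu, hv]

noncomputable def tensorFunctional (t₁ : P →ₗ[R] R) (t₂ : Q →ₗ[R] R) : P ⊗[R] Q →ₗ[R] R :=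
  LinearMap.mul' R R ∘ₗ map t₁ t₂

@[simp]
theorem tensorFunctional_tmul (t₁ : P →ₗ[R] R) (t₂ : Q →ₗ[R] R) (x : P) (y : Q) :
    tensorFunctional t₁ t₂ (x ⊗ₜ[R] y) = t₁ x * t₂ y :=
  rfl

theorem tensorFunctional_mul_comm {t₁ : P →ₗ[R] R} {t₂ : Q →ₗ[R] R}
    (ht₁ : ∀ x y, t₁ (x * y) = t₁ (y * x)) (ht₂ : ∀ x y, t₂ (x * y) = t₂ (y * x))
    (z w : P ⊗[R] Q) : tensorFunctional t₁ t₂ (z * w) = tensorFunctional t₁ t₂ (w * z) := by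
  induction z using TensorProduct.induction_on with
  | zero => simp
  | add z z' hz hz' => simp only [add_mul, mul_add, map_add, hz, hz']
  | tmul x y =>
    induction w using TensorProduct.induction_on with
    | zero => simp
    | add w w' hw hw' => simp only [add_mul, mul_add, map_add, hw, hw']
    | tmul x' y' => simp [ht₁ x, ht₂ y]

theorem sliceMap_tensorFunctional_includeLeft_mul_includeRight (t₁ : P →ₗ[R] R)
    (t₂ : Q →ₗ[R] R) (s : P ⊗[R] B) (u : Q ⊗[R] B) :
    sliceMap (tensorFunctional t₁ t₂)
        (Algebra.TensorProduct.map
            (Algebra.TensorProduct.includeLeft : P →ₐ[R] P ⊗[R] Q) (.id R B) s *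
          Algebra.TensorProduct.map
            (Algebra.TensorProduct.includeRight : Q →ₐ[R] P ⊗[R] Q) (.id R B) u) =
      sliceMap t₁ s * sliceMap t₂ u := by
  induction s using TensorProduct.induction_on with
  | zero => simp
  | add s s' hs hs' => simp only [add_mul, map_add, hs, hs']
  | tmul x a =>
    induction u using TensorProduct.induction_on with
    | zero => simp
    | add u u' hu hu' => simp only [mul_add, map_add, hu, hu']
    | tmul y b => simpa [mul_smul] using smul_comm (t₁ x) (t₂ y) (a * b)

theorem sliceMap_tensorFunctional_includeRight_mul_includeLeft (t₁ : P →ₗ[R] R)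
    (t₂ : Q →ₗ[R] R) (s : P ⊗[R] B) (u : Q ⊗[R] B) :
    sliceMap (tensorFunctional t₁ t₂)
        (Algebra.TensorProduct.map
            (Algebra.TensorProduct.includeRight : Q →ₐ[R] P ⊗[R] Q) (.id R B) u *
          Algebra.TensorProduct.map
            (Algebra.TensorProduct.includeLeft : P →ₐ[R] P ⊗[R] Q) (.id R B) s) =
      sliceMap t₂ u * sliceMap t₁ s := by
  induction s using TensorProduct.induction_on with
  | zero => simp
  | add s s' hs hs' => simp only [mul_add, map_add, hs, hs']
  | tmul x a =>
    induction u using TensorProduct.induction_on with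
    | zero => simp
    | add u u' hu hu' => simp only [add_mul, map_add, hu, hu']
    | tmul y b => simp [mul_smul]

end TensorProduct

theorem transfer_matrices_commute
    (X : Module.End K V ⊗[K] Module.End K W)
    (S : Module.End K V ⊗[K] A) (T : Module.End K W ⊗[K] A)
    (hX : IsUnit X)
    (hYBE : emb12 K A V W X * emb13 K A V W S * emb23 K A V W T =
      emb23 K A V W T * emb13 K A V W S * emb12 K A V W X) :
    partialTrace K A V S * partialTrace K A W T =
      partialTrace K A W T * partialTrace K A V S := by
  obtain ⟨u, rfl⟩ := hX
  -- `partialTrace K A V` is `sliceMap (trace K V)`, and `emb12`, `emb13`, `emb23` unfold to the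
  -- embeddings of the lemmas above.
  let τ := sliceMap (B := A) (tensorFunctional (LinearMap.trace K V) (LinearMap.trace K W))
  have hτ_cyclic : ∀ x w, τ (emb12 K A V W x * w) = τ (w * emb12 K A V W x) :=
    sliceMap_tmul_one_mul_comm
      (tensorFunctional_mul_comm (LinearMap.trace_mul_comm K) (LinearMap.trace_mul_comm K))
  have hSTconj : emb13 K A V W S * emb23 K A V W T =
      emb12 K A V W ↑u⁻¹ * (emb23 K A V W T * emb13 K A V W S * emb12 K A V W ↑u) := by
    rw [← hYBE, ← mul_assoc, ← mul_assoc, ← map_mul, Units.inv_mul, map_one, one_mul]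
  calc partialTrace K A V S * partialTrace K A W T
      = τ (emb13 K A V W S * emb23 K A V W T) :=
        (sliceMap_tensorFunctional_includeLeft_mul_includeRight _ _ S T).symm
    _ = τ (emb23 K A V W T * emb13 K A V W S * (emb12 K A V W ↑u * emb12 K A V W ↑u⁻¹)) := by
        rw [hSTconj, hτ_cyclic, mul_assoc]
    _ = τ (emb23 K A V W T * emb13 K A V W S) := by
        rw [← map_mul, Units.mul_inv, map_one, mul_one]
    _ = partialTrace K A W T * partialTrace K A V S :=
        sliceMap_tensorFunctional_includeRight_mul_includeLeft _ _ S T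

end
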